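/- arXiv:2306.01493 — 5 statements merged into one kernel-verified Lean document; each statement's English description precedes it below -/
import Mathlib

section
/- A graph G admits a nowhere-zero integer 4-flow if and only if G admits a nowhere-zero Z₂×Z₂-flow. -/
open Finset
def edgeCount {V : Type} [DecidableEq V] (s : Sym2 V) (v : V) : ℕ :=
  Sym2.lift ⟨fun a b => (if a = v then 1 else 0) + (if b = v then 1 else 0),
    fun a b => by dsimp; omega⟩ s


/-- A `ℤ₂ × ℤ₂`-flow of a multigraph with edge-ends map `ends`:
the values on edges incident with a vertex (loops counted twice) sum to `(0,0)`. -/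
def IsFlow {V E : Type} [DecidableEq V] [Fintype E] (ends : E → Sym2 V)
    (f : E → ZMod 2 × ZMod 2) : Prop :=
  ∀ v : V, ∑ e : E, edgeCount (ends e) v • f e = 0

/-- An even subgraph (cycle): every vertex has even degree. -/
def IsEvenSub {V E : Type} [DecidableEq V] (ends : E → Sym2 V) (S : Finset E) : Prop :=
  ∀ v : V, Even (∑ e ∈ S, edgeCount (ends e) v)

/-- A circuit: a nonempty connected 2-regular subgraph, given by its edge set. -/
def IsCircuit {V E : Type} [DecidableEq V] (ends : E → Sym2 V) (CE : Finset E) : Prop :=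
  CE.Nonempty ∧
  (∀ v : V, (∑ e ∈ CE, edgeCount (ends e) v = 0) ∨ (∑ e ∈ CE, edgeCount (ends e) v = 2)) ∧
  ∀ e₁ ∈ CE, ∀ e₂ ∈ CE,
    Relation.ReflTransGen (fun a b => ∃ v : V, v ∈ ends a ∧ v ∈ ends b ∧ a ∈ CE ∧ b ∈ CE) e₁ e₂

open scoped symmDiff

namespace FourFlow
variable {V E : Type} [DecidableEq V]

def fdeg (ends : E → Sym2 V) (S : Finset E) (v : V) : ℕ := ∑ e ∈ S, edgeCount (ends e) v

def bdry [Fintype E] (D : E → V × V) (z : E → ℤ) (v : V) : ℤ :=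
  ∑ e, z e * ((if (D e).1 = v then 1 else 0) - (if (D e).2 = v then 1 else 0))

lemma edgeCount_mk (a b v : V) :
    edgeCount s(a,b) v = (if a = v then 1 else 0) + (if b = v then 1 else 0) := rfl

lemma edgeCount_le_two (s : Sym2 V) (v : V) : edgeCount s v ≤ 2 := by
  induction s using Sym2.ind with | _ a b => rw [edgeCount_mk]; split_ifs <;> omega

lemma even_edgeCount_of_ne_one {s : Sym2 V} {v : V} (h : edgeCount s v ≠ 1) :
    Even (edgeCount s v) := by
  induction s using Sym2.ind with | _ a b =>
    rw [edgeCount_mk] at *; split_ifs at * <;> simp_all <;> omega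

lemma exists_one_of_odd {ends : E → Sym2 V} {R : Finset E} {a : V}
    (h : Odd (fdeg ends R a)) : ∃ e ∈ R, edgeCount (ends e) a = 1 := by
  by_contra hc
  push_neg at hc
  have : Even (fdeg ends R a) := by
    apply Finset.even_sum
    intro e he
    exact even_edgeCount_of_ne_one (hc e he)
  exact (Nat.not_odd_iff_even.mpr this) h

lemma fdeg_erase {ends : E → Sym2 V} {R : Finset E} {e : E} [DecidableEq E] (he : e ∈ R) (v : V) :
    fdeg ends R v = fdeg ends (R.erase e) v + edgeCount (ends e) v := by
  rw [fdeg, fdeg, ← Finset.sum_erase_add _ _ he]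

lemma bdry_add [Fintype E] (D : E → V × V) (x y : E → ℤ) (v : V) :
    bdry D (x + y) v = bdry D x v + bdry D y v := by
  simp [bdry, add_mul, Finset.sum_add_distrib]

def sgl [DecidableEq E] (e : E) (c : ℤ) : E → ℤ := fun e' => if e' = e then c else 0

lemma bdry_sgl [Fintype E] [DecidableEq E] (D : E → V × V) (e : E) (c : ℤ) (v : V) :
    bdry D (sgl e c) v
      = c * ((if (D e).1 = v then 1 else 0) - (if (D e).2 = v then 1 else 0)) := by
  rw [bdry, Finset.sum_eq_single e]
  · simp [sgl]
  · intro b _ hb; simp [sgl, hb]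
  · intro h; exact absurd (Finset.mem_univ e) h

lemma intCast_zmod2_eq_zero {m : ℤ} : (m : ZMod 2) = 0 ↔ Even m := by
  rw [ZMod.intCast_zmod_eq_zero_iff_dvd, Int.even_iff]
  constructor <;> intro h <;> omega

lemma intCast_zmod2_eq_one {m : ℤ} : (m : ZMod 2) = 1 ↔ Odd m := by
  rw [← Int.not_even_iff_odd, ← intCast_zmod2_eq_zero]
  have : ∀ x : ZMod 2, x = 1 ↔ ¬ x = 0 := by decide
  exact this _

lemma natCast_zmod2_eq_zero {n : ℕ} : (n : ZMod 2) = 0 ↔ Even n := by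
  rw [ZMod.natCast_eq_zero_iff, Nat.even_iff]
  constructor <;> intro h <;> omega

lemma bdry_cast [Fintype E] {ends : E → Sym2 V} {D : E → V × V}
    (hD : ∀ e, s((D e).1, (D e).2) = ends e) (z : E → ℤ) (v : V) :
    ((bdry D z v : ℤ) : ZMod 2)
      = ∑ e, (edgeCount (ends e) v : ZMod 2) * (z e : ZMod 2) := by
  rw [bdry]
  push_cast
  apply Finset.sum_congr rfl
  intro e _
  rw [← hD e, edgeCount_mk]
  push_cast
  have h2 : (2 : ZMod 2) = 0 := rfl
  have hneg : ∀ x : ZMod 2, -x = x := by decide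
  split_ifs <;> ring_nf <;> simp [h2, hneg, mul_comm]

lemma ite_eq_comm (a v : V) : (if a = v then (1:ℤ) else 0) = (if v = a then 1 else 0) := by
  by_cases h : a = v
  · simp [h]
  · rw [if_neg h, if_neg (fun hh : v = a => h hh.symm)]

lemma trail [Fintype E] [DecidableEq E] {ends : E → Sym2 V} {D : E → V × V}
    (hD : ∀ e, s((D e).1, (D e).2) = ends e) :
    ∀ n (R : Finset E), R.card ≤ n → ∀ a b : V, a ≠ b →
    Odd (fdeg ends R a) → (∀ v, v ≠ a → v ≠ b → Even (fdeg ends R v)) →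
    ∃ (C : Finset E) (x : E → ℤ), C ⊆ R ∧ (∀ e, x e ≠ 0 ↔ e ∈ C) ∧ (∀ e, |x e| ≤ 1) ∧
      ∀ v, bdry D x v = (if v = a then 1 else 0) - (if v = b then 1 else 0) := by
  intro n
  induction n with
  | zero =>
    intro R hR a b _ hodd _
    rw [Nat.le_zero, Finset.card_eq_zero] at hR
    subst hR
    simp [fdeg] at hodd
  | succ n ih =>
    intro R hR a b hab hodd hev
    obtain ⟨e, heR, hce⟩ := exists_one_of_odd hodd
    -- identify the endpoints
    have hpq : edgeCount (ends e) a
        = (if (D e).1 = a then 1 else 0) + (if (D e).2 = a then 1 else 0) := by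
      rw [← hD e, edgeCount_mk]
    -- get σ and the other endpoint u
    obtain ⟨σ, u, hσ, hua, hbd, hcnt⟩ :
        ∃ (σ : ℤ) (u : V), (σ = 1 ∨ σ = -1) ∧ u ≠ a ∧
          (∀ v, bdry D (sgl e σ) v = (if v = a then 1 else 0) - (if v = u then 1 else 0)) ∧
          (∀ v, edgeCount (ends e) v = (if a = v then 1 else 0) + (if u = v then 1 else 0)) := by
      rw [hpq] at hce
      by_cases h1 : (D e).1 = a
      · have h2 : (D e).2 ≠ a := by by_contra hc; simp [h1, hc] at hce
        refine ⟨1, (D e).2, Or.inl rfl, h2, ?_, ?_⟩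
        · intro v
          rw [bdry_sgl, one_mul, h1]
          congr 1 <;> simp [eq_comm]
        · intro v; rw [← hD e, edgeCount_mk, h1]
      · have h2 : (D e).2 = a := by by_contra hc; simp [h1, hc] at hce
        have h1' : (D e).1 ≠ a := h1
        refine ⟨-1, (D e).1, Or.inr rfl, h1', ?_, ?_⟩
        · intro v
          rw [bdry_sgl, h2]
          have : ∀ p q : ℤ, -1 * (p - q) = q - p := by intro p q; ring
          rw [this]
          congr 1 <;> simp [eq_comm]
        · intro v; rw [← hD e, edgeCount_mk, h2]; ring
    have hσne : σ ≠ 0 := by rcases hσ with h | h <;> simp [h]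
    have hσabs : |σ| ≤ 1 := by rcases hσ with h | h <;> simp [h]
    set R' := R.erase e with hR'
    have hcard : R'.card ≤ n := by
      rw [hR', Finset.card_erase_of_mem heR]
      omega
    by_cases hub : u = b
    · -- single edge trail
      refine ⟨{e}, sgl e σ, Finset.singleton_subset_iff.mpr heR, ?_, ?_, ?_⟩
      · intro e'
        simp only [sgl, Finset.mem_singleton]
        split_ifs with h <;> simp [h, hσne]
      · intro e'
        simp only [sgl]
        split_ifs <;> simp [hσabs]
      · intro v; rw [hbd v, hub]
    · -- recurse
      have hodd' : Odd (fdeg ends R' u) := by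
        have h1 := fdeg_erase (ends := ends) heR u
        rw [← hR'] at h1
        have h2 : edgeCount (ends e) u = 1 := by
          rw [hcnt u]
          simp [Ne.symm hua]
        have h3 : Even (fdeg ends R u) := hev u hua hub
        rw [Nat.even_iff] at h3
        rw [Nat.odd_iff]
        omega
      have hev' : ∀ v, v ≠ u → v ≠ b → Even (fdeg ends R' v) := by
        intro v hvu hvb
        have h1 := fdeg_erase (ends := ends) heR v
        rw [← hR'] at h1
        by_cases hva : v = a
        · subst hva
          have h2 : edgeCount (ends e) v = 1 := by
            rw [hcnt v]; simp [Ne.symm hvu]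
          rw [Nat.odd_iff] at hodd
          rw [Nat.even_iff]
          omega
        · have h2 : edgeCount (ends e) v = 0 := by
            have hav : ¬ a = v := fun h => hva h.symm
            have huv : ¬ u = v := fun h => hvu h.symm
            rw [hcnt v, if_neg hav, if_neg huv]
          have h3 : Even (fdeg ends R v) := hev v hva hvb
          rw [Nat.even_iff] at h3 ⊢
          omega
      obtain ⟨C', x', hC'R, hsupp', habs', hbd'⟩ := ih R' hcard u b hub hodd' hev'
      have heC' : e ∉ C' := fun h => (Finset.notMem_erase e R) (hC'R h)
      refine ⟨insert e C', x' + sgl e σ, ?_, ?_, ?_, ?_⟩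
      · exact Finset.insert_subset heR (hC'R.trans (Finset.erase_subset e R))
      · intro e'
        by_cases h : e' = e
        · subst h
          have : x' e' = 0 := by
            by_contra hc
            exact heC' ((hsupp' e').mp hc)
          simp [this, sgl, hσne]
        · simp [sgl, h, hsupp' e', heC', Finset.mem_insert]
      · intro e'
        by_cases h : e' = e
        · subst h
          have : x' e' = 0 := by
            by_contra hc
            exact heC' ((hsupp' e').mp hc)
          simp [this, sgl, hσabs]
        · simp [sgl, h, habs' e']
      · intro v
        rw [bdry_add, hbd' v, hbd v]
        have h1 : (if v = u then (1:ℤ) else 0) - (if v = b then 1 else 0) +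
            ((if v = a then 1 else 0) - (if v = u then 1 else 0))
            = (if v = a then 1 else 0) - (if v = b then 1 else 0) := by ring
        rw [h1]

lemma fdeg_cast [Fintype E] [DecidableEq E] (ends : E → Sym2 V) (S : Finset E) (v : V) :
    ((fdeg ends S v : ℕ) : ZMod 2)
      = ∑ e, (edgeCount (ends e) v : ZMod 2) * (if e ∈ S then 1 else 0) := by
  simp only [mul_ite, mul_one, mul_zero, Finset.sum_ite_mem, Finset.univ_inter]
  rw [fdeg]
  push_cast
  rfl

lemma even_fdeg_of_bdry [Fintype E] [DecidableEq E] {ends : E → Sym2 V} {D : E → V × V}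
    (hD : ∀ e, s((D e).1, (D e).2) = ends e) {z : E → ℤ} {S : Finset E}
    (hz : ∀ e, Odd (z e) ↔ e ∈ S) (v : V) (hb : Even (bdry D z v)) :
    Even (fdeg ends S v) := by
  rw [← natCast_zmod2_eq_zero, fdeg_cast]
  have h1 : ∀ e : E, (if e ∈ S then (1 : ZMod 2) else 0) = ((z e : ℤ) : ZMod 2) := by
    intro e
    by_cases h : e ∈ S
    · rw [if_pos h, eq_comm, intCast_zmod2_eq_one]
      exact (hz e).mpr h
    · rw [if_neg h, eq_comm, intCast_zmod2_eq_zero]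
      rcases Int.even_or_odd (z e) with he | ho
      · exact he
      · exact absurd ((hz e).mp ho) h
  calc ∑ e, (edgeCount (ends e) v : ZMod 2) * (if e ∈ S then 1 else 0)
      = ∑ e, (edgeCount (ends e) v : ZMod 2) * ((z e : ℤ) : ZMod 2) := by
        apply Finset.sum_congr rfl; intro e _; rw [h1 e]
    _ = ((bdry D z v : ℤ) : ZMod 2) := (bdry_cast hD z v).symm
    _ = 0 := intCast_zmod2_eq_zero.mpr hb

lemma even_flow [Fintype E] [DecidableEq E] {ends : E → Sym2 V} {D : E → V × V}
    (hD : ∀ e, s((D e).1, (D e).2) = ends e) :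
    ∀ n (S : Finset E), S.card ≤ n → (∀ v, Even (fdeg ends S v)) →
    ∃ x : E → ℤ, (∀ e, x e ≠ 0 ↔ e ∈ S) ∧ (∀ e, |x e| ≤ 1) ∧ ∀ v, bdry D x v = 0 := by
  intro n
  induction n with
  | zero =>
    intro S hS _
    rw [Nat.le_zero, Finset.card_eq_zero] at hS
    subst hS
    exact ⟨0, by simp, by simp, by simp [bdry]⟩
  | succ n ih =>
    intro S hS hev
    rcases Finset.eq_empty_or_nonempty S with h | ⟨e, heS⟩
    · subst h
      exact ⟨0, by simp, by simp, by simp [bdry]⟩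
    by_cases hpq : (D e).1 = (D e).2
    · -- loop case
      have hcnt : ∀ v, edgeCount (ends e) v = 2 * (if (D e).1 = v then 1 else 0) := by
        intro v
        rw [← hD e, edgeCount_mk, ← hpq]
        ring
      have hcard : (S.erase e).card ≤ n := by
        rw [Finset.card_erase_of_mem heS]; omega
      have hev' : ∀ v, Even (fdeg ends (S.erase e) v) := by
        intro v
        have h1 := fdeg_erase (ends := ends) heS v
        have h2 := hcnt v
        have h3 := hev v
        rw [Nat.even_iff] at h3 ⊢
        split_ifs at h2 <;> omega
      obtain ⟨x', hsupp', habs', hbd'⟩ := ih (S.erase e) hcard hev'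
      have hex' : x' e = 0 := by
        by_contra hc
        exact (Finset.notMem_erase e S) ((hsupp' e).mp hc)
      refine ⟨x' + sgl e 1, ?_, ?_, ?_⟩
      · intro e'
        by_cases h : e' = e
        · subst h; simp [hex', sgl, heS]
        · simp only [Pi.add_apply, sgl, if_neg h, add_zero]
          rw [hsupp' e', Finset.mem_erase]
          tauto
      · intro e'
        by_cases h : e' = e
        · subst h; simp [hex', sgl]
        · simp [sgl, h, habs' e']
      · intro v
        rw [bdry_add, hbd' v, bdry_sgl, ← hpq]
        ring
    · -- non-loop case
      set R := S.erase e with hR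
      have hcard : R.card ≤ n := by
        rw [hR, Finset.card_erase_of_mem heS]; omega
      have hc1 : edgeCount (ends e) (D e).1 = 1 := by
        rw [← hD e, edgeCount_mk, if_pos rfl, if_neg (fun h => hpq h.symm)]
      have hodd : Odd (fdeg ends R (D e).1) := by
        have h1 := fdeg_erase (ends := ends) heS (D e).1
        rw [← hR] at h1
        have h3 := hev (D e).1
        rw [Nat.even_iff] at h3
        rw [Nat.odd_iff]
        omega
      have hevR : ∀ v, v ≠ (D e).1 → v ≠ (D e).2 → Even (fdeg ends R v) := by
        intro v h1v h2v
        have h1 := fdeg_erase (ends := ends) heS v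
        rw [← hR] at h1
        have hc : edgeCount (ends e) v = 0 := by
          rw [← hD e, edgeCount_mk,
            if_neg (fun h => h1v h.symm), if_neg (fun h => h2v h.symm)]
        have h3 := hev v
        rw [Nat.even_iff] at h3 ⊢
        omega
      obtain ⟨C, xt, hCR, hsuppt, habst, hbdt⟩ :=
        trail hD n R hcard (D e).1 (D e).2 hpq hodd hevR
      have heC : e ∉ C := fun h => (Finset.notMem_erase e S) (hCR h)
      have hxte : xt e = 0 := by
        by_contra hc
        exact heC ((hsuppt e).mp hc)
      -- the circuit flow z
      set z := xt + sgl e (-1) with hz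
      have hzsupp : ∀ e', z e' ≠ 0 ↔ e' ∈ insert e C := by
        intro e'
        by_cases h : e' = e
        · subst h; simp [hz, hxte, sgl]
        · simp only [hz, Pi.add_apply, sgl, if_neg h, add_zero, Finset.mem_insert]
          rw [hsuppt e']
          tauto
      have hzabs : ∀ e', |z e'| ≤ 1 := by
        intro e'
        by_cases h : e' = e
        · subst h; simp [hz, hxte, sgl]
        · simp only [hz, Pi.add_apply, sgl, if_neg h, add_zero]
          exact habst e'
      have hzbd : ∀ v, bdry D z v = 0 := by
        intro v
        rw [hz, bdry_add, hbdt v, bdry_sgl]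
        rw [ite_eq_comm ((D e).1) v, ite_eq_comm ((D e).2) v]
        ring
      have hzodd : ∀ e', Odd (z e') ↔ e' ∈ insert e C := by
        intro e'
        rw [← hzsupp e']
        have := hzabs e'
        rw [abs_le] at this
        rw [Int.odd_iff]
        omega
      have hins : insert e C ⊆ S := by
        apply Finset.insert_subset heS
        exact hCR.trans (Finset.erase_subset e S)
      set S2 := S \ insert e C with hS2
      have hdisj : ∀ e', e' ∈ S2 → e' ∉ insert e C := by
        intro e' h
        rw [hS2, Finset.mem_sdiff] at h
        exact h.2
      have hcard2 : S2.card ≤ n := by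
      -- S2 ⊆ R
        have hsub : S2 ⊆ R := by
          intro e' h
          rw [hS2, Finset.mem_sdiff] at h
          rw [hR, Finset.mem_erase]
          exact ⟨fun hc => h.2 (by rw [hc]; exact Finset.mem_insert_self e C), h.1⟩
        calc S2.card ≤ R.card := Finset.card_le_card hsub
          _ ≤ n := hcard
      have hevS2 : ∀ v, Even (fdeg ends S2 v) := by
        intro v
        have hsplit : fdeg ends S2 v + fdeg ends (insert e C) v = fdeg ends S v := by
          rw [fdeg, fdeg, fdeg, Finset.sum_sdiff hins]
        have h1 : Even (fdeg ends (insert e C) v) :=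
          even_fdeg_of_bdry hD hzodd v (by rw [hzbd v]; exact Even.zero)
        have h2 := hev v
        rw [Nat.even_iff] at h1 h2 ⊢
        omega
      obtain ⟨x'', hsupp'', habs'', hbd''⟩ := ih S2 hcard2 hevS2
      refine ⟨z + x'', ?_, ?_, ?_⟩
      · intro e'
        by_cases h : e' ∈ insert e C
        · have : x'' e' = 0 := by
            by_contra hc
            exact (hdisj e' ((hsupp'' e').mp hc)) h
          simp only [Pi.add_apply, this, add_zero]
          rw [hzsupp e']
          exact ⟨fun _ => hins h, fun _ => h⟩
        · have : z e' = 0 := by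
            by_contra hc
            exact h ((hzsupp e').mp hc)
          simp only [Pi.add_apply, this, zero_add]
          rw [hsupp'' e', hS2, Finset.mem_sdiff]
          tauto
      · intro e'
        by_cases h : e' ∈ insert e C
        · have : x'' e' = 0 := by
            by_contra hc
            exact (hdisj e' ((hsupp'' e').mp hc)) h
          simp only [Pi.add_apply, this, add_zero]
          exact hzabs e'
        · have : z e' = 0 := by
            by_contra hc
            exact h ((hzsupp e').mp hc)
          simp only [Pi.add_apply, this, zero_add]
          exact habs'' e'
      · intro v
        rw [bdry_add, hzbd v, hbd'' v, add_zero]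

def lk (ends : E → Sym2 V) (P : E → Prop) (a b : V) : Prop :=
  ∃ e, P e ∧ a ∈ ends e ∧ b ∈ ends e

lemma lk_symm {ends : E → Sym2 V} {P : E → Prop} : Symmetric (lk ends P) :=
  fun _ _ ⟨e, hP, ha, hb⟩ => ⟨e, hP, hb, ha⟩

lemma join_pair [DecidableEq E] {ends : E → Sym2 V} {P : E → Prop} {u v : V}
    (h : Relation.ReflTransGen (lk ends P) u v) :
    ∃ J : Finset E, (∀ e ∈ J, P e) ∧
      ∀ w, (fdeg ends J w + (if w = u then 1 else 0) + (if w = v then 1 else 0)) % 2 = 0 := by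
  induction h with
  | refl =>
    refine ⟨∅, by simp, fun w => ?_⟩
    simp only [fdeg, Finset.sum_empty, zero_add]
    split_ifs <;> rfl
  | @tail b c _ hbc ih =>
    obtain ⟨J, hJP, hJ⟩ := ih
    obtain ⟨e, hPe, hbe, hce⟩ := hbc
    obtain ⟨d, hd⟩ := (Sym2.mem_iff_exists).mp hbe
    rw [hd, Sym2.mem_iff] at hce
    rcases hce with hcb | hcd
    · subst hcb
      exact ⟨J, hJP, hJ⟩
    · subst hcd
      have hcnt : ∀ w, edgeCount (ends e) w
          = (if w = b then 1 else 0) + (if w = c then 1 else 0) := by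
        intro w
        rw [hd, edgeCount_mk]
        congr 1
        · by_cases h : b = w
          · simp [h]
          · rw [if_neg h, if_neg (fun hh : w = b => h hh.symm)]
        · by_cases h : c = w
          · simp [h]
          · rw [if_neg h, if_neg (fun hh : w = c => h hh.symm)]
      by_cases heJ : e ∈ J
      · refine ⟨J.erase e, fun e' he' => hJP e' (Finset.mem_of_mem_erase he'), fun w => ?_⟩
        have h1 := fdeg_erase (ends := ends) heJ w
        have h2 := hJ w
        have h3 := hcnt w
        split_ifs at * <;> omega
      · refine ⟨insert e J, ?_, fun w => ?_⟩
        · intro e' he'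
          rcases Finset.mem_insert.mp he' with h | h
          · subst h; exact hPe
          · exact hJP e' h
        · have h1 : fdeg ends (insert e J) w = fdeg ends J w + edgeCount (ends e) w := by
            rw [fdeg, fdeg, Finset.sum_insert heJ]; ring
          have h2 := hJ w
          have h3 := hcnt w
          split_ifs at * <;> omega

lemma fdeg_symmDiff [DecidableEq E] {ends : E → Sym2 V} (A B : Finset E) (w : V) :
    (fdeg ends (A ∆ B) w) % 2 = (fdeg ends A w + fdeg ends B w) % 2 := by
  have h1 : fdeg ends (A ∪ B) w + fdeg ends (A ∩ B) w = fdeg ends A w + fdeg ends B w := by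
    rw [fdeg, fdeg, fdeg, fdeg]
    exact Finset.sum_union_inter
  have hsub : A ∩ B ⊆ A ∪ B := (Finset.inter_subset_left).trans Finset.subset_union_left
  have h2 : fdeg ends (A ∆ B) w + fdeg ends (A ∩ B) w = fdeg ends (A ∪ B) w := by
    rw [fdeg, fdeg, fdeg]
    rw [symmDiff_eq_sup_sdiff_inf]
    exact Finset.sum_sdiff hsub
  omega

lemma tjoin [DecidableEq E] {ends : E → Sym2 V} {P : E → Prop}
    [DecidableRel (Relation.ReflTransGen (lk ends P))] :
    ∀ n (T : Finset V), T.card ≤ n →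
    (∀ u : V, Even ((T.filter
        (fun v => Relation.ReflTransGen (lk ends P) u v)).card)) →
    ∃ J : Finset E, (∀ e ∈ J, P e) ∧
      ∀ w, (fdeg ends J w + (if w ∈ T then 1 else 0)) % 2 = 0 := by
  intro n
  induction n with
  | zero =>
    intro T hT _
    rw [Nat.le_zero, Finset.card_eq_zero] at hT
    subst hT
    exact ⟨∅, by simp, fun w => by simp [fdeg]⟩
  | succ n ih =>
    intro T hT hpar
    rcases Finset.eq_empty_or_nonempty T with h | ⟨u, huT⟩
    · subst h
      exact ⟨∅, by simp, fun w => by simp [fdeg]⟩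
    have hKu : u ∈ T.filter (fun v => Relation.ReflTransGen (lk ends P) u v) :=
      Finset.mem_filter.mpr ⟨huT, Relation.ReflTransGen.refl⟩
    have hKeven := hpar u
    obtain ⟨v, hvK, hvu⟩ : ∃ v ∈ T.filter (fun v => Relation.ReflTransGen (lk ends P) u v), v ≠ u := by
      by_contra hc
      push_neg at hc
      have : T.filter (fun v => Relation.ReflTransGen (lk ends P) u v) = {u} := by
        apply Finset.eq_singleton_iff_unique_mem.mpr
        exact ⟨hKu, hc⟩
      rw [this] at hKeven
      simp at hKeven
    obtain ⟨hvT, huv⟩ := Finset.mem_filter.mp hvK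
    obtain ⟨J₁, hJ₁P, hJ₁⟩ := join_pair (ends := ends) (P := P) huv
    set T' := (T.erase u).erase v with hT'
    have hvTu : v ∈ T.erase u := Finset.mem_erase.mpr ⟨hvu, hvT⟩
    have hcard' : T'.card ≤ n := by
      rw [hT', Finset.card_erase_of_mem hvTu, Finset.card_erase_of_mem huT]
      omega
    have hmemT' : ∀ w, w ∈ T' ↔ w ∈ T ∧ w ≠ u ∧ w ≠ v := by
      intro w
      rw [hT', Finset.mem_erase, Finset.mem_erase]
      tauto
    have hpar' : ∀ w : V, Even ((T'.filter (fun z => Relation.ReflTransGen (lk ends P) w z)).card) := by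
      intro w
      have hfe : T'.filter (fun z => Relation.ReflTransGen (lk ends P) w z)
          = ((T.filter (fun z => Relation.ReflTransGen (lk ends P) w z)).erase u).erase v := by
        ext x
        rw [Finset.mem_filter, hmemT' x, Finset.mem_erase, Finset.mem_erase,
          Finset.mem_filter]
        tauto
      rw [hfe]
      by_cases hwu : Relation.ReflTransGen (lk ends P) w u
      · have hwv : Relation.ReflTransGen (lk ends P) w v := hwu.trans huv
        have hu : u ∈ T.filter (fun z => Relation.ReflTransGen (lk ends P) w z) := Finset.mem_filter.mpr ⟨huT, hwu⟩
        have hv : v ∈ (T.filter (fun z => Relation.ReflTransGen (lk ends P) w z)).erase u :=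
          Finset.mem_erase.mpr ⟨hvu, Finset.mem_filter.mpr ⟨hvT, hwv⟩⟩
        rw [Finset.card_erase_of_mem hv, Finset.card_erase_of_mem hu]
        have h0 := hpar w
        rw [Nat.even_iff] at h0 ⊢
        have hle : 1 ≤ (T.filter (fun z => Relation.ReflTransGen (lk ends P) w z)).card := Finset.card_pos.mpr ⟨u, hu⟩
        have hle2 : 1 ≤ ((T.filter (fun z => Relation.ReflTransGen (lk ends P) w z)).erase u).card :=
          Finset.card_pos.mpr ⟨v, hv⟩
        rw [Finset.card_erase_of_mem hu] at hle2
        omega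
      · have hwv : ¬ Relation.ReflTransGen (lk ends P) w v := fun hc => hwu (hc.trans (by haveI : Std.Symm (lk ends P) := ⟨lk_symm⟩; exact Std.Symm.symm _ _ huv))
        have hu : u ∉ T.filter (fun z => Relation.ReflTransGen (lk ends P) w z) := by
          rw [Finset.mem_filter]; tauto
        have hv : v ∉ (T.filter (fun z => Relation.ReflTransGen (lk ends P) w z)).erase u := by
          rw [Finset.mem_erase, Finset.mem_filter]; tauto
        rw [Finset.erase_eq_of_notMem hv, Finset.erase_eq_of_notMem hu]
        exact hpar w
    obtain ⟨J₂, hJ₂P, hJ₂⟩ := ih T' hcard' hpar'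
    refine ⟨J₁ ∆ J₂, ?_, ?_⟩
    · intro e he
      rcases Finset.mem_symmDiff.mp he with ⟨h, _⟩ | ⟨h, _⟩
      · exact hJ₁P e h
      · exact hJ₂P e h
    · intro w
      have h1 := fdeg_symmDiff (ends := ends) J₁ J₂ w
      have h2 := hJ₁ w
      have h3 := hJ₂ w
      have h4 := hmemT' w
      by_cases hwu : w = u <;> by_cases hwv : w = v
      · exact absurd (hwu ▸ hwv.symm) hvu
      · subst hwu
        have : w ∉ T' := fun hc => ((hmemT' w).mp hc).2.1 rfl
        rw [if_neg this] at h3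
        rw [if_pos rfl, if_neg (fun h : (w:V) = v => hwv h)] at h2
        rw [if_pos huT]
        omega
      · subst hwv
        have : w ∉ T' := fun hc => ((hmemT' w).mp hc).2.2 rfl
        rw [if_neg this] at h3
        rw [if_pos rfl, if_neg hwu] at h2
        rw [if_pos hvT]
        omega
      · rw [if_neg hwu, if_neg hwv] at h2
        by_cases hwT : w ∈ T
        · have : w ∈ T' := (hmemT' w).mpr ⟨hwT, hwu, hwv⟩
          rw [if_pos this] at h3
          rw [if_pos hwT]
          omega
        · have : w ∉ T' := fun hc => hwT ((hmemT' w).mp hc).1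
          rw [if_neg this] at h3
          rw [if_neg hwT]
          omega


lemma fdeg_cast_bdry [Fintype E] [DecidableEq E] {ends : E → Sym2 V} {D : E → V × V}
    (hD : ∀ e, s((D e).1, (D e).2) = ends e) {z : E → ℤ} {S : Finset E}
    (hz : ∀ e, Odd (z e) ↔ e ∈ S) (v : V) :
    ((fdeg ends S v : ℕ) : ZMod 2) = ((bdry D z v : ℤ) : ZMod 2) := by
  rw [fdeg_cast]
  have h1 : ∀ e : E, (if e ∈ S then (1 : ZMod 2) else 0) = ((z e : ℤ) : ZMod 2) := by
    intro e
    by_cases h : e ∈ S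
    · rw [if_pos h, eq_comm, intCast_zmod2_eq_one]
      exact (hz e).mpr h
    · rw [if_neg h, eq_comm, intCast_zmod2_eq_zero]
      rcases Int.even_or_odd (z e) with he | ho
      · exact he
      · exact absurd ((hz e).mp ho) h
  calc ∑ e, (edgeCount (ends e) v : ZMod 2) * (if e ∈ S then 1 else 0)
      = ∑ e, (edgeCount (ends e) v : ZMod 2) * ((z e : ℤ) : ZMod 2) := by
        apply Finset.sum_congr rfl; intro e _; rw [h1 e]
    _ = ((bdry D z v : ℤ) : ZMod 2) := (bdry_cast hD z v).symm

lemma even_fdeg_iff_even_bdry [Fintype E] [DecidableEq E] {ends : E → Sym2 V} {D : E → V × V}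
    (hD : ∀ e, s((D e).1, (D e).2) = ends e) {z : E → ℤ} {S : Finset E}
    (hz : ∀ e, Odd (z e) ↔ e ∈ S) (v : V) :
    Even (fdeg ends S v) ↔ Even (bdry D z v) := by
  rw [← natCast_zmod2_eq_zero, fdeg_cast_bdry hD hz v, intCast_zmod2_eq_zero]

lemma bdry_eq_filter [Fintype E] (D : E → V × V) (z : E → ℤ) (v : V) :
    bdry D z v = (∑ e ∈ Finset.univ.filter (fun e => (D e).1 = v), z e)
      - ∑ e ∈ Finset.univ.filter (fun e => (D e).2 = v), z e := by
  rw [Finset.sum_filter, Finset.sum_filter, bdry, ← Finset.sum_sub_distrib]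
  apply Finset.sum_congr rfl
  intro e _
  split_ifs <;> ring

lemma even_card_odd_filter (K : Finset V) (F : V → ℤ)
    [DecidablePred fun v => Odd (F v)] (h : ∑ v ∈ K, F v = 0) :
    Even ((K.filter (fun v => Odd (F v))).card) := by
  rw [← natCast_zmod2_eq_zero]
  have h1 : (((K.filter (fun v => Odd (F v))).card : ℕ) : ZMod 2)
      = ∑ v ∈ K, if Odd (F v) then (1 : ZMod 2) else 0 := by
    simp [Finset.sum_boole]
  have h2 : ∀ v ∈ K, (if Odd (F v) then (1 : ZMod 2) else 0) = ((F v : ℤ) : ZMod 2) := by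
    intro v _
    split_ifs with hv
    · exact (intCast_zmod2_eq_one.mpr hv).symm
    · exact (intCast_zmod2_eq_zero.mpr (Int.not_odd_iff_even.mp hv)).symm
  have h3 : ∑ v ∈ K, ((F v : ℤ) : ZMod 2) = ((∑ v ∈ K, F v : ℤ) : ZMod 2) := by
    push_cast
    rfl
  rw [h1, Finset.sum_congr rfl h2, h3, h]
  rfl

lemma ksum [Fintype E] [DecidableEq E] {ends : E → Sym2 V} {D : E → V × V}
    (hD : ∀ e, s((D e).1, (D e).2) = ends e) (x : E → ℤ) (P : E → Prop)
    (hx : ∀ e, x e ≠ 0 → P e) (K : Finset V)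
    (hK : ∀ a b : V, lk ends P a b → (a ∈ K ↔ b ∈ K)) :
    ∑ v ∈ K, bdry D x v = 0 := by
  rw [show ∑ v ∈ K, bdry D x v = ∑ e : E, ∑ v ∈ K,
      x e * ((if (D e).1 = v then (1:ℤ) else 0) - (if (D e).2 = v then 1 else 0)) from
    Finset.sum_comm]
  apply Finset.sum_eq_zero
  intro e _
  rw [← Finset.mul_sum]
  by_cases hx0 : x e = 0
  · rw [hx0, zero_mul]
  · have hP := hx e hx0
    have hlk : lk ends P (D e).1 (D e).2 :=
      ⟨e, hP, hD e ▸ Sym2.mem_mk_left _ _, hD e ▸ Sym2.mem_mk_right _ _⟩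
    have hmem := hK _ _ hlk
    rw [Finset.sum_sub_distrib, Finset.sum_ite_eq K ((D e).1) (fun _ => (1:ℤ)),
      Finset.sum_ite_eq K ((D e).2) (fun _ => (1:ℤ))]
    by_cases h1 : (D e).1 ∈ K
    · rw [if_pos h1, if_pos (hmem.mp h1), sub_self, mul_zero]
    · rw [if_neg h1, if_neg (fun hc => h1 (hmem.mpr hc)), sub_self, mul_zero]

lemma decomp (t : ℤ) (h : |t| < 4) (h2 : t ≠ 0) :
    ∃ a b : ℤ, t = a + 2*b ∧ -1 ≤ a ∧ a ≤ 1 ∧ -1 ≤ b ∧ b ≤ 1 ∧ (a % 2 = t % 2) ∧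
      (a = 0 ↔ t % 2 = 0) ∧ (t % 2 = 0 → b ≠ 0) := by
  obtain ⟨h1, h3⟩ := abs_lt.mp h
  interval_cases t
  · exact ⟨-1, -1, by norm_num⟩
  · exact ⟨0, -1, by norm_num⟩
  · exact ⟨-1, 0, by norm_num⟩
  · exact absurd rfl h2
  · exact ⟨1, 0, by norm_num⟩
  · exact ⟨0, 1, by norm_num⟩
  · exact ⟨1, 1, by norm_num⟩

end FourFlow


/-- Tutte, case `k = 4`, `Γ = ℤ₂×ℤ₂`: a graph admits a
nowhere-zero integer 4-flow iff it admits a nowhere-zero `ℤ₂×ℤ₂`-flow. -/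
theorem four_flow_iff_klein_flow {V E : Type} [Fintype V] [Fintype E] [DecidableEq V]
    (ends : E → Sym2 V) :
    (∃ (D : E → V × V) (f : E → ℤ),
        (∀ e, s((D e).1, (D e).2) = ends e) ∧
        (∀ e, |f e| < 4) ∧ (∀ e, f e ≠ 0) ∧
        (∀ v : V, ∑ e ∈ Finset.univ.filter (fun e => (D e).1 = v), f e =
                  ∑ e ∈ Finset.univ.filter (fun e => (D e).2 = v), f e)) ↔
    (∃ g : E → ZMod 2 × ZMod 2, IsFlow ends g ∧ ∀ e, g e ≠ 0) := by
  classical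
  constructor
  · rintro ⟨D, f, hD, habs, hnz, hcons⟩
    have hbf : ∀ v, FourFlow.bdry D f v = 0 := by
      intro v
      rw [FourFlow.bdry_eq_filter, hcons v, sub_self]
    choose x y hsum hxa hxb hya hyb hxmod hxz hyne using
      fun e => FourFlow.decomp (f e) (habs e) (hnz e)
    set P : E → Prop := fun e => Odd (f e) with hP
    set S₁ : Finset E := Finset.univ.filter (fun e => Odd (f e)) with hS₁
    have hS₁mem : ∀ e, e ∈ S₁ ↔ Odd (f e) := by intro e; rw [hS₁]; simp
    have hS₁even : ∀ v, Even (FourFlow.fdeg ends S₁ v) := by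
      intro v
      exact FourFlow.even_fdeg_of_bdry hD (fun e => (hS₁mem e).symm) v
        (by rw [hbf v]; exact Even.zero)
    have hbxy : ∀ v, FourFlow.bdry D x v + 2 * FourFlow.bdry D y v = 0 := by
      intro v
      have hfd : FourFlow.bdry D f v
          = FourFlow.bdry D x v + 2 * FourFlow.bdry D y v := by
        rw [FourFlow.bdry, FourFlow.bdry, FourFlow.bdry, Finset.mul_sum,
          ← Finset.sum_add_distrib]
        apply Finset.sum_congr rfl
        intro e _
        rw [hsum e]
        ring
      rw [← hfd, hbf v]
    have hKc : ∀ u : V, ∀ a b : V, FourFlow.lk ends P a b →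
        (a ∈ Finset.univ.filter
            (fun v => Relation.ReflTransGen (FourFlow.lk ends P) u v)
          ↔ b ∈ Finset.univ.filter
            (fun v => Relation.ReflTransGen (FourFlow.lk ends P) u v)) := by
      intro u a b hab
      simp only [Finset.mem_filter, Finset.mem_univ, true_and]
      exact ⟨fun h => h.tail hab, fun h => h.tail (FourFlow.lk_symm hab)⟩
    have hxodd : ∀ e, x e ≠ 0 → P e := by
      intro e hxe
      show Odd (f e)
      rw [Int.odd_iff]
      rcases Int.emod_two_eq_zero_or_one (f e) with h | h
      · exact absurd ((hxz e).mpr h) hxe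
      · exact h
    have hyK : ∀ u : V, ∑ v ∈ Finset.univ.filter
        (fun v => Relation.ReflTransGen (FourFlow.lk ends P) u v),
          FourFlow.bdry D y v = 0 := by
      intro u
      have hxK := FourFlow.ksum hD x P hxodd _ (hKc u)
      have hall : ∑ v ∈ Finset.univ.filter
          (fun v => Relation.ReflTransGen (FourFlow.lk ends P) u v),
          (FourFlow.bdry D x v + 2 * FourFlow.bdry D y v) = 0 :=
        Finset.sum_eq_zero (fun v _ => hbxy v)
      rw [Finset.sum_add_distrib, hxK, zero_add, ← Finset.mul_sum] at hall
      omega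
    set T : Finset V := Finset.univ.filter (fun v => Odd (FourFlow.bdry D y v)) with hT
    have hTeven : ∀ u : V, Even ((T.filter
        (fun v => Relation.ReflTransGen (FourFlow.lk ends P) u v)).card) := by
      intro u
      have hset : T.filter (fun v => Relation.ReflTransGen (FourFlow.lk ends P) u v)
          = (Finset.univ.filter
              (fun v => Relation.ReflTransGen (FourFlow.lk ends P) u v)).filter
            (fun v => Odd (FourFlow.bdry D y v)) := by
        ext w
        rw [hT]
        simp only [Finset.mem_filter, Finset.mem_univ, true_and]
        tauto
      rw [hset]
      exact FourFlow.even_card_odd_filter _ _ (hyK u)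
    obtain ⟨J, hJP, hJdeg⟩ := FourFlow.tjoin T.card T le_rfl hTeven
    set Sy : Finset E := Finset.univ.filter (fun e => y e ≠ 0) with hSy
    have hyoddiff : ∀ e, Odd (y e) ↔ e ∈ Sy := by
      intro e
      rw [hSy]
      simp only [Finset.mem_filter, Finset.mem_univ, true_and]
      rw [Int.odd_iff]
      have h1 := hya e
      have h2 := hyb e
      constructor <;> intro h <;> omega
    set S₂ : Finset E := Sy ∆ J with hS₂def
    have hS₂even : ∀ v, Even (FourFlow.fdeg ends S₂ v) := by
      intro v
      have h1 := FourFlow.fdeg_symmDiff (ends := ends) Sy J v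
      have h2 := hJdeg v
      have h3 := FourFlow.even_fdeg_iff_even_bdry hD hyoddiff v
      rw [← hS₂def] at h1
      by_cases hb : Even (FourFlow.bdry D y v)
      · have hvT : v ∉ T := by
          rw [hT]
          simp only [Finset.mem_filter, Finset.mem_univ, true_and]
          exact Int.not_odd_iff_even.mpr hb
        rw [if_neg hvT] at h2
        have h4 : Even (FourFlow.fdeg ends Sy v) := h3.mpr hb
        rw [Nat.even_iff] at h4 ⊢
        omega
      · have hvT : v ∈ T := by
          rw [hT]
          simp only [Finset.mem_filter, Finset.mem_univ, true_and]
          exact Int.not_even_iff_odd.mp hb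
        rw [if_pos hvT] at h2
        have h4 : ¬ Even (FourFlow.fdeg ends Sy v) := fun hc => hb (h3.mp hc)
        rw [Nat.even_iff] at h4 ⊢
        omega
    have hcover : ∀ e, e ∈ S₁ ∨ e ∈ S₂ := by
      intro e
      by_cases hf : Odd (f e)
      · exact Or.inl ((hS₁mem e).mpr hf)
      · right
        have hfe : f e % 2 = 0 := by
          rw [Int.odd_iff] at hf
          rcases Int.emod_two_eq_zero_or_one (f e) with h | h
          · exact h
          · exact absurd h hf
        have hy0 : y e ≠ 0 := hyne e hfe
        have heSy : e ∈ Sy := by rw [hSy]; simp [hy0]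
        have heJ : e ∉ J := fun hc => hf (hJP e hc)
        rw [hS₂def]
        exact Finset.mem_symmDiff.mpr (Or.inl ⟨heSy, heJ⟩)
    refine ⟨fun e => (if e ∈ S₁ then 1 else 0, if e ∈ S₂ then 1 else 0), ?_, ?_⟩
    · intro v
      have hcomp : ∀ SS : Finset E, Even (FourFlow.fdeg ends SS v) →
          ∑ e : E, edgeCount (ends e) v • (if e ∈ SS then (1 : ZMod 2) else 0) = 0 := by
        intro SS hSS
        have heq : ∑ e : E, edgeCount (ends e) v • (if e ∈ SS then (1 : ZMod 2) else 0)
            = ∑ e : E, (edgeCount (ends e) v : ZMod 2) * (if e ∈ SS then 1 else 0) := by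
          apply Finset.sum_congr rfl
          intro e _
          rw [nsmul_eq_mul]
        rw [heq, ← FourFlow.fdeg_cast, FourFlow.natCast_zmod2_eq_zero.mpr hSS]
      have h1 := hcomp S₁ (hS₁even v)
      have h2 := hcomp S₂ (hS₂even v)
      rw [Prod.ext_iff]
      constructor
      · rw [Prod.fst_sum]
        exact h1
      · rw [Prod.snd_sum]
        exact h2
    · intro e hc
      rcases hcover e with h | h
      · have := congrArg Prod.fst hc
        simp only [if_pos h] at this
        exact one_ne_zero this
      · have := congrArg Prod.snd hc
        simp only [if_pos h] at this
        exact one_ne_zero this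
  · rintro ⟨g, hflow, hgnz⟩
    have hex : ∀ z : Sym2 V, ∃ p : V × V, s(p.1, p.2) = z := by
      intro z
      induction z using Sym2.ind with | _ a b => exact ⟨(a, b), rfl⟩
    choose D hD using fun e => hex (ends e)
    set S₁ : Finset E := Finset.univ.filter (fun e => (g e).1 = 1) with hS₁
    set S₂ : Finset E := Finset.univ.filter (fun e => (g e).2 = 1) with hS₂
    have hz2 : ∀ a : ZMod 2, a = 0 ∨ a = 1 := by decide
    have hm1 : ∀ e, e ∈ S₁ ↔ (g e).1 = 1 := by intro e; rw [hS₁]; simp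
    have hm2 : ∀ e, e ∈ S₂ ↔ (g e).2 = 1 := by intro e; rw [hS₂]; simp
    have hgcomp1 : ∀ e, (g e).1 = (if e ∈ S₁ then (1 : ZMod 2) else 0) := by
      intro e
      by_cases h : e ∈ S₁
      · rw [if_pos h]; exact (hm1 e).mp h
      · rw [if_neg h]
        rcases hz2 ((g e).1) with h0 | h1
        · exact h0
        · exact absurd ((hm1 e).mpr h1) h
    have hgcomp2 : ∀ e, (g e).2 = (if e ∈ S₂ then (1 : ZMod 2) else 0) := by
      intro e
      by_cases h : e ∈ S₂
      · rw [if_pos h]; exact (hm2 e).mp h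
      · rw [if_neg h]
        rcases hz2 ((g e).2) with h0 | h1
        · exact h0
        · exact absurd ((hm2 e).mpr h1) h
    have hS₁even : ∀ v, Even (FourFlow.fdeg ends S₁ v) := by
      intro v
      rw [← FourFlow.natCast_zmod2_eq_zero, FourFlow.fdeg_cast]
      have h0 := congrArg Prod.fst (hflow v)
      rw [Prod.fst_sum] at h0
      calc ∑ e, (edgeCount (ends e) v : ZMod 2) * (if e ∈ S₁ then 1 else 0)
          = ∑ e, (edgeCount (ends e) v • g e).1 := by
            apply Finset.sum_congr rfl
            intro e _
            rw [← hgcomp1 e, ← nsmul_eq_mul]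
            rfl
        _ = 0 := h0
    have hS₂even : ∀ v, Even (FourFlow.fdeg ends S₂ v) := by
      intro v
      rw [← FourFlow.natCast_zmod2_eq_zero, FourFlow.fdeg_cast]
      have h0 := congrArg Prod.snd (hflow v)
      rw [Prod.snd_sum] at h0
      calc ∑ e, (edgeCount (ends e) v : ZMod 2) * (if e ∈ S₂ then 1 else 0)
          = ∑ e, (edgeCount (ends e) v • g e).2 := by
            apply Finset.sum_congr rfl
            intro e _
            rw [← hgcomp2 e, ← nsmul_eq_mul]
            rfl
        _ = 0 := h0
    obtain ⟨x₁, hx₁supp, hx₁abs, hx₁bd⟩ :=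
      FourFlow.even_flow hD S₁.card S₁ le_rfl hS₁even
    obtain ⟨x₂, hx₂supp, hx₂abs, hx₂bd⟩ :=
      FourFlow.even_flow hD S₂.card S₂ le_rfl hS₂even
    refine ⟨D, fun e => x₁ e + 2 * x₂ e, hD, ?_, ?_, ?_⟩
    · intro e
      have h1 := abs_le.mp (hx₁abs e)
      have h2 := abs_le.mp (hx₂abs e)
      show |x₁ e + 2 * x₂ e| < 4
      rw [abs_lt]
      obtain ⟨h1a, h1b⟩ := h1
      obtain ⟨h2a, h2b⟩ := h2
      constructor <;> omega
    · intro e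
      show x₁ e + 2 * x₂ e ≠ 0
      have h1 := abs_le.mp (hx₁abs e)
      have h2 := abs_le.mp (hx₂abs e)
      obtain ⟨h1a, h1b⟩ := h1
      obtain ⟨h2a, h2b⟩ := h2
      by_cases h : e ∈ S₁
      · have hne := (hx₁supp e).mpr h
        omega
      · have hx10 : x₁ e = 0 := by
          by_contra hcon
          exact h ((hx₁supp e).mp hcon)
        have he2 : e ∈ S₂ := by
          rcases hz2 ((g e).1) with h0 | h1'
          · rcases hz2 ((g e).2) with hh0 | hh1
            · exfalso
              apply hgnz e
              rw [Prod.ext_iff]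
              exact ⟨h0, hh0⟩
            · exact (hm2 e).mpr hh1
          · exact absurd ((hm1 e).mpr h1') h
        have hne := (hx₂supp e).mpr he2
        omega
    · intro v
      have hb : FourFlow.bdry D (fun e => x₁ e + 2 * x₂ e) v = 0 := by
        have heq : FourFlow.bdry D (fun e => x₁ e + 2 * x₂ e) v
            = FourFlow.bdry D x₁ v + 2 * FourFlow.bdry D x₂ v := by
          rw [FourFlow.bdry, FourFlow.bdry, FourFlow.bdry, Finset.mul_sum,
            ← Finset.sum_add_distrib]
          apply Finset.sum_congr rfl
          intro e _
          ring
        rw [heq, hx₁bd v, hx₂bd v]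
        ring
      rw [FourFlow.bdry_eq_filter] at hb
      exact sub_eq_zero.mp hb
end

section
/- Let G be a graph with a circuit C and weight ω : E(G) → Z⁺ with ω(C) ≤ 35 and ω(C) not divisible by 4. Suppose f is a Z₂×Z₂-flow of G with E(G) − E(C) ⊆ supp(f). Then there exists a Z₂×Z₂-flow g of G with E(G) − E(C) ⊆ supp(g) and ω(E_{g=(0,0)}(C)) < ω(C)/4. -/
open Finset

/-- if `ω(C) ≤ 35` is not divisible by 4 and some `ℤ₂×ℤ₂`-flow is
nonzero off the circuit `C`, then some such flow `g` has `ω(E_{g=(0,0)}(C)) < ω(C)/4`. -/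
theorem exists_good_flow_of_not_dvd {V E : Type} [Fintype V] [Fintype E] [DecidableEq V]
    (ends : E → Sym2 V) (CE : Finset E) (hC : IsCircuit ends CE)
    (ω : E → ℕ) (hω : ∀ e, 0 < ω e)
    (h35 : ∑ e ∈ CE, ω e ≤ 35) (hndvd : ¬ (4 ∣ ∑ e ∈ CE, ω e))
    (f : E → ZMod 2 × ZMod 2) (hf : IsFlow ends f) (hsupp : ∀ e, e ∉ CE → f e ≠ 0) :
    ∃ g : E → ZMod 2 × ZMod 2, IsFlow ends g ∧ (∀ e, e ∉ CE → g e ≠ 0) ∧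
      4 * ∑ e ∈ CE.filter (fun e => g e = 0), ω e < ∑ e ∈ CE, ω e := by
  classical
  set T := ∑ e ∈ CE, ω e with hT
  set W : ZMod 2 × ZMod 2 → ℕ := fun a => ∑ e ∈ CE.filter (fun e => f e = a), ω e with hW
  have hself : ∀ x : ZMod 2 × ZMod 2, x + x = 0 := by decide
  have hsum : ∑ a : ZMod 2 × ZMod 2, W a = T := by
    rw [hT, hW]
    exact Finset.sum_fiberwise CE (fun e => f e) ω
  have huniv : (Finset.univ : Finset (ZMod 2 × ZMod 2)) = {(0,0),(0,1),(1,0),(1,1)} := by decide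
  have hsum4 : W (0,0) + W (0,1) + W (1,0) + W (1,1) = T := by
    rw [← hsum, huniv]
    rw [Finset.sum_insert (by decide), Finset.sum_insert (by decide),
      Finset.sum_insert (by decide), Finset.sum_singleton]
    ring
  have hex : ∃ a : ZMod 2 × ZMod 2, 4 * W a < T := by
    by_contra h
    push_neg at h
    have h1 := h (0,0); have h2 := h (0,1); have h3 := h (1,0); have h4 := h (1,1)
    omega
  obtain ⟨a, ha⟩ := hex
  refine ⟨fun e => f e + (if e ∈ CE then a else 0), ?_, ?_, ?_⟩
  · intro v
    have := hf v
    simp only [smul_add]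
    rw [Finset.sum_add_distrib, this, zero_add]
    have : ∀ e : E, edgeCount (ends e) v • (if e ∈ CE then a else 0)
        = if e ∈ CE then edgeCount (ends e) v • a else 0 := by
      intro e; split <;> simp
    simp only [this]
    rw [Finset.sum_ite_mem, Finset.univ_inter, ← Finset.sum_smul]
    rcases hC.2.1 v with h0 | h2
    · rw [h0, zero_smul]
    · rw [h2, two_smul, hself]
  · intro e he
    simp [he]
    exact hsupp e he
  · have hfe : CE.filter (fun e => f e + (if e ∈ CE then a else 0) = 0)
        = CE.filter (fun e => f e = a) := by
      apply Finset.filter_congr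
      intro e he
      simp only [he, if_true]
      constructor
      · intro h
        have : f e + a + a = a := by rw [h, zero_add]
        rwa [add_assoc, hself, add_zero] at this
      · intro h; rw [h, hself]
    rw [hfe]
    exact ha
end

section
/- Let (G, f, C, ω) be a minimal counterexample quadruple: f is a Z₂×Z₂-flow of G, C a circuit, ω : E(G) → Z⁺ with ω(C) ≤ 35; ω(E_{g=(0,0)}(C)) ≥ ω(C)/4 for every Z₂×Z₂-flow g of G with supp(g) − E(C) = supp(f) − E(C); and |E(G)| is minimum subject to these conditions. Then for every such flow g and every a ∈ Z₂×Z₂, ω(E_{g=a}(C)) = ω(C)/4 ≤ 8; in particular 4 divides ω(C) and ω(C) ≤ 32. -/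
open Finset

/-- A quadruple `(G, f, C, ω)` satisfying conditions (S1) and (S2) of the paper:
`C` is a circuit with positive weights and `ω(C) ≤ 35`, `f` is a `ℤ₂×ℤ₂`-flow, and
every flow `g` with the same support off `C` (`g ∈ ℛ_C(f)`) has
`ω(E_{g=(0,0)}(C)) ≥ ω(C)/4`. -/
def GoodQuad {V E : Type} [Fintype E] [DecidableEq V]
    (ends : E → Sym2 V) (CE : Finset E) (ω : E → ℕ) (f : E → ZMod 2 × ZMod 2) : Prop :=
  IsCircuit ends CE ∧ (∀ e, 0 < ω e) ∧ (∑ e ∈ CE, ω e ≤ 35) ∧ IsFlow ends f ∧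
  ∀ g : E → ZMod 2 × ZMod 2, IsFlow ends g →
    (∀ e, e ∉ CE → (g e ≠ 0 ↔ f e ≠ 0)) →
    ∑ e ∈ CE, ω e ≤ 4 * ∑ e ∈ CE.filter (fun e => g e = 0), ω e


lemma exists_phi (a : ZMod 2 × ZMod 2) :
    ∃ (φ : (ZMod 2 × ZMod 2) →+ (ZMod 2 × ZMod 2)) (c : ZMod 2 × ZMod 2),
      (∀ x, φ x = 0 ↔ x = 0) ∧ (∀ x, φ x + c = 0 ↔ x = a) := by
  have h4 : ∀ b : ZMod 2 × ZMod 2,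
      b = ((0 : ZMod 2), (0 : ZMod 2)) ∨ b = ((0 : ZMod 2), (1 : ZMod 2)) ∨
      b = ((1 : ZMod 2), (0 : ZMod 2)) ∨ b = ((1 : ZMod 2), (1 : ZMod 2)) := by decide
  rcases h4 a with h | h | h | h <;> subst h
  · exact ⟨AddMonoidHom.id _, 0, by decide, by decide⟩
  · exact ⟨AddMonoidHom.mk' (fun p => (p.1 + p.2, p.2))
      (by intro x y; simp [Prod.ext_iff]; ring), (1, 1), by decide, by decide⟩
  · exact ⟨AddMonoidHom.mk' (fun p => (p.1, p.1 + p.2))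
      (by intro x y; simp [Prod.ext_iff]; ring), (1, 1), by decide, by decide⟩
  · exact ⟨AddMonoidHom.id _, (1, 1), by decide, by decide⟩

lemma key_class_bound {V E : Type} [Fintype E] [DecidableEq V]
    (ends : E → Sym2 V) (CE : Finset E) (ω : E → ℕ) (f g : E → ZMod 2 × ZMod 2)
    (hquad : GoodQuad ends CE ω f) (hg : IsFlow ends g)
    (hs : ∀ e, e ∉ CE → (g e ≠ 0 ↔ f e ≠ 0)) (a : ZMod 2 × ZMod 2) :
    ∑ e ∈ CE, ω e ≤ 4 * ∑ e ∈ CE.filter (fun e => g e = a), ω e := by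
  classical
  obtain ⟨φ, c, hφ0, hφa⟩ := exists_phi a
  have h2c : ∀ x : ZMod 2 × ZMod 2, 2 • x = 0 := by decide
  set g' : E → ZMod 2 × ZMod 2 := fun e => φ (g e) + (if e ∈ CE then c else 0) with hg'def
  have hflow : IsFlow ends g' := by
    intro v
    have h1 : ∑ e : E, edgeCount (ends e) v • g' e
        = ∑ e : E, edgeCount (ends e) v • φ (g e)
          + ∑ e : E, edgeCount (ends e) v • (if e ∈ CE then c else 0) := by
      rw [← Finset.sum_add_distrib]
      exact Finset.sum_congr rfl fun e _ => by simp [hg'def, smul_add]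
    have h2 : ∑ e : E, edgeCount (ends e) v • φ (g e) = 0 := by
      have : ∀ e : E, edgeCount (ends e) v • φ (g e)
          = φ (edgeCount (ends e) v • g e) := fun e => (map_nsmul φ _ _).symm
      simp_rw [this, ← map_sum]
      rw [hg v, map_zero]
    have h3 : ∑ e : E, edgeCount (ends e) v • (if e ∈ CE then c else 0) = 0 := by
      have : ∀ e : E, edgeCount (ends e) v • (if e ∈ CE then c else 0)
          = if e ∈ CE then edgeCount (ends e) v • c else 0 := by
        intro e; split_ifs <;> simp
      simp_rw [this]
      rw [Finset.sum_ite_mem, Finset.univ_inter, ← Finset.sum_smul]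
      rcases hquad.1.2.1 v with h | h <;> rw [h]
      · simp
      · exact h2c c
    rw [h1, h2, h3, add_zero]
  have hsupp : ∀ e, e ∉ CE → (g' e ≠ 0 ↔ f e ≠ 0) := by
    intro e he
    rw [← hs e he]
    simp only [hg'def, if_neg he, add_zero]
    exact not_congr (hφ0 (g e))
  have hfin := hquad.2.2.2.2 g' hflow hsupp
  have hfilter : CE.filter (fun e => g' e = 0) = CE.filter (fun e => g e = a) := by
    apply Finset.filter_congr
    intro e he
    simp only [hg'def, if_pos he]
    exact hφa (g e)
  rwa [hfilter] at hfin

/-- in a minimal counterexample quadruple, every flow class on `C`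
has weight exactly `ω(C)/4 ≤ 8`; in particular `4 ∣ ω(C)` and `ω(C) ≤ 32`. -/
theorem minimal_quad_classes_equal {V E : Type} [Fintype V] [Fintype E] [DecidableEq V]
    (ends : E → Sym2 V) (CE : Finset E) (ω : E → ℕ) (f : E → ZMod 2 × ZMod 2)
    (hquad : GoodQuad ends CE ω f)
    (hmin : ∀ (V' E' : Type) [Fintype V'] [Fintype E'] [DecidableEq V']
      (ends' : E' → Sym2 V') (CE' : Finset E') (ω' : E' → ℕ) (f' : E' → ZMod 2 × ZMod 2),
      GoodQuad ends' CE' ω' f' → Fintype.card E ≤ Fintype.card E') :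
    (∀ g : E → ZMod 2 × ZMod 2, IsFlow ends g →
      (∀ e, e ∉ CE → (g e ≠ 0 ↔ f e ≠ 0)) →
      ∀ a : ZMod 2 × ZMod 2,
        4 * ∑ e ∈ CE.filter (fun e => g e = a), ω e = ∑ e ∈ CE, ω e ∧
        ∑ e ∈ CE.filter (fun e => g e = a), ω e ≤ 8) ∧
    (4 ∣ ∑ e ∈ CE, ω e) ∧ (∑ e ∈ CE, ω e ≤ 32) := by
  classical
  have hmain : ∀ g : E → ZMod 2 × ZMod 2, IsFlow ends g →
      (∀ e, e ∉ CE → (g e ≠ 0 ↔ f e ≠ 0)) →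
      ∀ a : ZMod 2 × ZMod 2,
        4 * ∑ e ∈ CE.filter (fun e => g e = a), ω e = ∑ e ∈ CE, ω e ∧
        ∑ e ∈ CE.filter (fun e => g e = a), ω e ≤ 8 := by
    intro g hg hs a
    have hkey := fun b => key_class_bound ends CE ω f g hquad hg hs b
    have hsum : ∑ b ∈ (Finset.univ : Finset (ZMod 2 × ZMod 2)),
        ∑ e ∈ CE.filter (fun e => g e = b), ω e = ∑ e ∈ CE, ω e := by
      exact Finset.sum_fiberwise_of_maps_to (fun e _ => Finset.mem_univ (g e)) ω
    have huniv : (Finset.univ : Finset (ZMod 2 × ZMod 2)) =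
        {((0 : ZMod 2), (0 : ZMod 2)), ((0 : ZMod 2), (1 : ZMod 2)),
         ((1 : ZMod 2), (0 : ZMod 2)), ((1 : ZMod 2), (1 : ZMod 2))} := by decide
    rw [huniv, Finset.sum_insert (by decide), Finset.sum_insert (by decide),
        Finset.sum_insert (by decide), Finset.sum_singleton] at hsum
    have h00 := hkey ((0 : ZMod 2), (0 : ZMod 2))
    have h01 := hkey ((0 : ZMod 2), (1 : ZMod 2))
    have h10 := hkey ((1 : ZMod 2), (0 : ZMod 2))
    have h11 := hkey ((1 : ZMod 2), (1 : ZMod 2))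
    have h35 : ∑ e ∈ CE, ω e ≤ 35 := hquad.2.2.1
    have h4 : a = ((0 : ZMod 2), (0 : ZMod 2)) ∨ a = ((0 : ZMod 2), (1 : ZMod 2)) ∨
        a = ((1 : ZMod 2), (0 : ZMod 2)) ∨ a = ((1 : ZMod 2), (1 : ZMod 2)) := by
      revert a; decide
    rcases h4 with h | h | h | h <;> subst h <;> omega
  refine ⟨hmain, ?_, ?_⟩
  · have h := (hmain f hquad.2.2.2.1 (fun e _ => Iff.rfl) 0).1
    exact ⟨_, h.symm⟩
  · have h := hmain f hquad.2.2.2.1 (fun e _ => Iff.rfl) 0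
    omega
end

section
/- Let (G, f, C, ω) satisfy: f is a Z₂×Z₂-flow, C a circuit, ω : E(G) → Z⁺, ω(E_{g=(0,0)}(C)) ≥ ω(C)/4 for all g ∈ ℛ_C(f), and |E(G)| is minimum among all quadruples with ω(C) ≤ 35 having these properties. Then for every g ∈ ℛ_C(f) and every a ∈ Z₂×Z₂, the set E_{g=a}(C) is a matching in C (no two edges of equal flow value on C share an endpoint). -/
open Finset

private lemma edgeCount_mk' {V : Type} [DecidableEq V] (a b u : V) :
    edgeCount s(a, b) u = (if a = u then 1 else 0) + (if b = u then 1 else 0) := rfl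

private lemma edgeCount_pos' {V : Type} [DecidableEq V] {s : Sym2 V} {u : V} (h : u ∈ s) :
    1 ≤ edgeCount s u := by
  induction s using Sym2.ind with
  | _ a b =>
    rw [Sym2.mem_iff] at h
    rw [edgeCount_mk']
    rcases h with h | h <;> simp [h]

private lemma add_self_zmod22 : ∀ p : ZMod 2 × ZMod 2, p + p = 0 := by decide

private lemma nsmul_red (m k : ℕ) (p : ZMod 2 × ZMod 2) : (m + 2 * k) • p = m • p := by
  rw [add_nsmul, mul_nsmul, two_nsmul, add_self_zmod22, smul_zero, add_zero]
/-- in a minimal counterexample quadruple, every class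
`E_{g=a}(C)` is a matching of `C`. -/
theorem minimal_quad_classes_matching {V E : Type} [Fintype V] [Fintype E] [DecidableEq V]
    (ends : E → Sym2 V) (CE : Finset E) (ω : E → ℕ) (f : E → ZMod 2 × ZMod 2)
    (hquad : GoodQuad ends CE ω f)
    (hmin : ∀ (V' E' : Type) [Fintype V'] [Fintype E'] [DecidableEq V']
      (ends' : E' → Sym2 V') (CE' : Finset E') (ω' : E' → ℕ) (f' : E' → ZMod 2 × ZMod 2),
      GoodQuad ends' CE' ω' f' → Fintype.card E ≤ Fintype.card E') :
    ∀ g : E → ZMod 2 × ZMod 2, IsFlow ends g →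
      (∀ e, e ∉ CE → (g e ≠ 0 ↔ f e ≠ 0)) →
      ∀ a : ZMod 2 × ZMod 2, ∀ e₁ ∈ CE, ∀ e₂ ∈ CE,
        g e₁ = a → g e₂ = a → e₁ ≠ e₂ →
        ∀ v : V, ¬ (v ∈ ends e₁ ∧ v ∈ ends e₂) := by
  classical
  intro g hgflow hgsupp a e₁ he₁ e₂ he₂ hge₁ hge₂ hne hv hvmem
  obtain ⟨hv1, hv2⟩ := hvmem
  obtain ⟨hcirc, hωpos, hω35, hfflow, hcond⟩ := hquad
  obtain ⟨hCEne, hdeg, hconn⟩ := hcirc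
  obtain ⟨x, hx⟩ := Sym2.mem_iff_exists.mp hv1
  obtain ⟨z, hz⟩ := Sym2.mem_iff_exists.mp hv2
  -- basic degree facts at v
  have hpair : edgeCount (ends e₁) hv + edgeCount (ends e₂) hv
      ≤ ∑ e ∈ CE, edgeCount (ends e) hv := by
    have hsub : ({e₁, e₂} : Finset E) ⊆ CE := by
      intro t ht; simp only [Finset.mem_insert, Finset.mem_singleton] at ht
      rcases ht with rfl | rfl <;> assumption
    calc edgeCount (ends e₁) hv + edgeCount (ends e₂) hv
        = ∑ e ∈ ({e₁, e₂} : Finset E), edgeCount (ends e) hv := (Finset.sum_pair (f := fun e => edgeCount (ends e) hv) hne).symm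
      _ ≤ _ := Finset.sum_le_sum_of_subset hsub
  have hxv : x ≠ hv := by
    intro h
    rw [h] at hx
    have h1 : edgeCount (ends e₁) hv = 2 := by rw [hx, edgeCount_mk']; simp
    have h2 := edgeCount_pos' hv2
    rcases hdeg hv with h4 | h4 <;> omega
  have hzv : z ≠ hv := by
    intro h
    rw [h] at hz
    have h1 : edgeCount (ends e₂) hv = 2 := by rw [hz, edgeCount_mk']; simp
    have h2 := edgeCount_pos' hv1
    rcases hdeg hv with h4 | h4 <;> omega
  have hec1 : edgeCount (ends e₁) hv = 1 := by rw [hx, edgeCount_mk']; simp [hxv]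
  have hec2 : edgeCount (ends e₂) hv = 1 := by rw [hz, edgeCount_mk']; simp [hzv]
  have hDv : ∑ e ∈ CE, edgeCount (ends e) hv = 2 := by
    rcases hdeg hv with h | h
    · omega
    · exact h
  have honly : ∀ b ∈ CE, hv ∈ ends b → b = e₁ ∨ b = e₂ := by
    intro b hb hvb
    by_contra hcon
    push_neg at hcon
    obtain ⟨hb1, hb2⟩ := hcon
    have hsub : ({e₁, e₂, b} : Finset E) ⊆ CE := by
      intro t ht
      simp only [Finset.mem_insert, Finset.mem_singleton] at ht
      rcases ht with rfl | rfl | rfl <;> assumption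
    have hle : ∑ e ∈ ({e₁, e₂, b} : Finset E), edgeCount (ends e) hv
        ≤ ∑ e ∈ CE, edgeCount (ends e) hv := Finset.sum_le_sum_of_subset hsub
    have hs : ∑ e ∈ ({e₁, e₂, b} : Finset E), edgeCount (ends e) hv
        = edgeCount (ends e₁) hv + (edgeCount (ends e₂) hv + edgeCount (ends b) hv) := by
      rw [Finset.sum_insert (by simp [hne, Ne.symm hb1]),
        Finset.sum_insert (by simp [Ne.symm hb2]), Finset.sum_singleton]
    have hecb := edgeCount_pos' hvb
    omega
  -- the lifted quadruple
  set E' := {e : E // e ≠ e₂} with hE'def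
  set ends' : E' → Sym2 V := fun e => if e.1 = e₁ then s(x, z) else ends e.1 with hends'def
  set CE' : Finset E' := CE.subtype (fun e => e ≠ e₂) with hCE'def
  set ω' : E' → ℕ := fun e => if e.1 = e₁ then ω e₁ + ω e₂ else ω e.1 with hω'def
  set f' : E' → ZMod 2 × ZMod 2 := fun e => g e.1 with hf'def
  have hCE'mem : ∀ e : E', e ∈ CE' ↔ e.1 ∈ CE := fun e => Finset.mem_subtype
  have he₁' : (⟨e₁, hne⟩ : E') ∈ CE' := (hCE'mem _).mpr he₁
  -- the key flow-sum identity
  have hflowsum : ∀ (h : E → ZMod 2 × ZMod 2), h e₂ = h e₁ → ∀ u : V,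
      ∑ e : E', edgeCount (ends' e) u • h e.1 = ∑ e : E, edgeCount (ends e) u • h e := by
    intro h hh u
    have h1 : ∑ e : E', edgeCount (ends' e) u • h e.1
        = ∑ e ∈ Finset.univ.erase e₂,
            edgeCount (if e = e₁ then s(x, z) else ends e) u • h e := by
      rw [← Finset.filter_ne', ← Finset.sum_subtype_eq_sum_filter
        (fun e => edgeCount (if e = e₁ then s(x, z) else ends e) u • h e) (p := fun e => e ≠ e₂),
        Finset.subtype_univ]
    rw [h1]
    have he₁m : e₁ ∈ Finset.univ.erase e₂ := by simp [hne]
    rw [← Finset.add_sum_erase _ _ he₁m,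
      ← Finset.add_sum_erase _ (fun e => edgeCount (ends e) u • h e) (Finset.mem_univ e₂),
      ← Finset.add_sum_erase _ (fun e => edgeCount (ends e) u • h e) he₁m]
    have hrest : ∑ e ∈ (Finset.univ.erase e₂).erase e₁,
        edgeCount (if e = e₁ then s(x, z) else ends e) u • h e
        = ∑ e ∈ (Finset.univ.erase e₂).erase e₁, edgeCount (ends e) u • h e := by
      refine Finset.sum_congr rfl fun e he => ?_
      rw [if_neg (Finset.ne_of_mem_erase he)]
    rw [hrest, if_pos rfl, ← add_assoc, hh]
    congr 1
    rw [← add_nsmul]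
    have hcoef : edgeCount (ends e₂) u + edgeCount (ends e₁) u
        = edgeCount s(x, z) u + 2 * (if hv = u then 1 else 0) := by
      rw [hx, hz, edgeCount_mk', edgeCount_mk', edgeCount_mk']
      split_ifs <;> omega
    rw [hcoef, nsmul_red]
  -- the degree identity
  have hdegsum : ∀ u : V, (∑ e ∈ CE', edgeCount (ends' e) u) + (if hv = u then 2 else 0)
      = ∑ e ∈ CE, edgeCount (ends e) u := by
    intro u
    have h1 : ∑ e ∈ CE', edgeCount (ends' e) u
        = ∑ e ∈ CE.erase e₂, edgeCount (if e = e₁ then s(x, z) else ends e) u := by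
      rw [hCE'def, ← Finset.filter_ne', ← Finset.sum_subtype_eq_sum_filter
        (fun e => edgeCount (if e = e₁ then s(x, z) else ends e) u) (p := fun e => e ≠ e₂)]
    rw [h1]
    have he₁m : e₁ ∈ CE.erase e₂ := Finset.mem_erase.mpr ⟨hne, he₁⟩
    rw [← Finset.add_sum_erase _ _ he₁m,
      ← Finset.add_sum_erase _ (fun e => edgeCount (ends e) u) he₂,
      ← Finset.add_sum_erase _ (fun e => edgeCount (ends e) u) he₁m]
    have hrest : ∑ e ∈ (CE.erase e₂).erase e₁,
        edgeCount (if e = e₁ then s(x, z) else ends e) u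
        = ∑ e ∈ (CE.erase e₂).erase e₁, edgeCount (ends e) u := by
      refine Finset.sum_congr rfl fun e he => ?_
      rw [if_neg (Finset.ne_of_mem_erase he)]
    rw [hrest, if_pos rfl]
    have hcoef : edgeCount s(x, z) u + (if hv = u then 2 else 0)
        = edgeCount (ends e₂) u + edgeCount (ends e₁) u := by
      rw [hx, hz, edgeCount_mk', edgeCount_mk', edgeCount_mk']
      split_ifs <;> omega
    omega
  -- weight-sum transfer lemma
  have hLsum : ∀ (P : E → Prop) [DecidablePred P], (P e₁ ↔ P e₂) →
      ∑ e ∈ CE'.filter (fun e => P e.1), ω' e = ∑ e ∈ CE.filter P, ω e := by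
    intro P _ hPiff
    have hset : CE'.filter (fun e => P e.1) = (CE.filter P).subtype (fun e => e ≠ e₂) := by
      ext e
      constructor
      · intro h
        have h' := Finset.mem_filter.mp h
        exact Finset.mem_subtype.mpr (Finset.mem_filter.mpr ⟨(hCE'mem e).mp h'.1, h'.2⟩)
      · intro h
        have h' := Finset.mem_filter.mp (Finset.mem_subtype.mp h)
        exact Finset.mem_filter.mpr ⟨(hCE'mem e).mpr h'.1, h'.2⟩
    rw [hset, hω'def]
    rw [Finset.sum_subtype_eq_sum_filter (fun e => if e = e₁ then ω e₁ + ω e₂ else ω e)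
      (p := fun e => e ≠ e₂), Finset.filter_ne']
    by_cases hP : P e₁
    · have hP2 : P e₂ := hPiff.mp hP
      set S := CE.filter P with hS
      have he₁S : e₁ ∈ S := Finset.mem_filter.mpr ⟨he₁, hP⟩
      have he₂S : e₂ ∈ S := Finset.mem_filter.mpr ⟨he₂, hP2⟩
      have he₁S' : e₁ ∈ S.erase e₂ := Finset.mem_erase.mpr ⟨hne, he₁S⟩
      have h1 : ∑ e ∈ S.erase e₂, (if e = e₁ then ω e₁ + ω e₂ else ω e)
          = (ω e₁ + ω e₂) + ∑ e ∈ (S.erase e₂).erase e₁, ω e := by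
        rw [← Finset.add_sum_erase _ _ he₁S']
        congr 1
        · simp
        · exact Finset.sum_congr rfl fun e he => if_neg (Finset.ne_of_mem_erase he)
      have h2 : ∑ e ∈ S, ω e = ω e₂ + (ω e₁ + ∑ e ∈ (S.erase e₂).erase e₁, ω e) := by
        rw [← Finset.add_sum_erase _ _ he₂S, ← Finset.add_sum_erase _ _ he₁S']
      omega
    · have hP2 : ¬ P e₂ := fun h => hP (hPiff.mpr h)
      have he₂S : e₂ ∉ CE.filter P := by simp [hP2]
      rw [Finset.erase_eq_of_notMem he₂S]
      refine Finset.sum_congr rfl fun e he => if_neg ?_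
      rintro rfl
      exact hP (Finset.mem_filter.mp he).2
  have hωsum : ∑ e ∈ CE', ω' e = ∑ e ∈ CE, ω e := by
    have := hLsum (fun _ => True) Iff.rfl
    simpa using this
  -- GoodQuad for the lifted quadruple
  have hgood : GoodQuad ends' CE' ω' f' := by
    refine ⟨⟨⟨⟨e₁, hne⟩, he₁'⟩, ?_, ?_⟩, ?_, ?_, ?_, ?_⟩
    · -- degrees
      intro u
      have h1 := hdegsum u
      by_cases huv : hv = u
      · subst huv
        rw [if_pos rfl] at h1
        left; omega
      · rw [if_neg huv] at h1
        rcases hdeg u with h | h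
        · left; omega
        · right; omega
    · -- connectivity
      intro a' ha' b' hb'
      set φ : E → E' := fun e => if h : e = e₂ then ⟨e₁, hne⟩ else ⟨e, h⟩ with hφdef
      have hφCE : ∀ p, p ∈ CE → φ p ∈ CE' := by
        intro p hp
        rw [hCE'mem]
        by_cases h : p = e₂ <;> simp [hφdef, h, he₁, hp]
      have hφends : ∀ p, p ∈ CE → ∀ u, u ∈ ends p → u ≠ hv → u ∈ ends' (φ p) := by
        intro p hp u hup huv
        by_cases h2 : p = e₂
        · subst h2
          have : u = z := by
            rw [hz, Sym2.mem_iff] at hup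
            tauto
          subst this
          simp [hφdef, hends'def, Sym2.mem_iff]
        · by_cases h1 : p = e₁
          · subst h1
            have : u = x := by
              rw [hx, Sym2.mem_iff] at hup
              tauto
            subst this
            simp [hφdef, hends'def, h2, Sym2.mem_iff]
          · simpa [hφdef, hends'def, h1, h2] using hup
      have hstep : ∀ p q : E, (∃ u, u ∈ ends p ∧ u ∈ ends q ∧ p ∈ CE ∧ q ∈ CE) →
          Relation.ReflTransGen
            (fun a b => ∃ u : V, u ∈ ends' a ∧ u ∈ ends' b ∧ a ∈ CE' ∧ b ∈ CE')
            (φ p) (φ q) := by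
        rintro p q ⟨u, hup, huq, hpC, hqC⟩
        by_cases huv : u = hv
        · subst huv
          have hp' := honly p hpC hup
          have hq' := honly q hqC huq
          have : φ p = φ q := by
            rcases hp' with rfl | rfl <;> rcases hq' with rfl | rfl <;> simp [hφdef, hne]
          rw [this]
        · exact Relation.ReflTransGen.single
            ⟨u, hφends p hpC u hup huv, hφends q hqC u huq huv, hφCE p hpC, hφCE q hqC⟩
      have hlift : ∀ {p q : E}, Relation.ReflTransGen
          (fun a b => ∃ u : V, u ∈ ends a ∧ u ∈ ends b ∧ a ∈ CE ∧ b ∈ CE) p q →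
          Relation.ReflTransGen
            (fun a b => ∃ u : V, u ∈ ends' a ∧ u ∈ ends' b ∧ a ∈ CE' ∧ b ∈ CE')
            (φ p) (φ q) := by
        intro p q hpq
        induction hpq with
        | refl => exact .refl
        | tail _ hbc ih => exact ih.trans (hstep _ _ hbc)
      have hφa : φ a'.1 = a' := by simp [hφdef, a'.2]
      have hφb : φ b'.1 = b' := by simp [hφdef, b'.2]
      have := hlift (hconn a'.1 ((hCE'mem a').mp ha') b'.1 ((hCE'mem b').mp hb'))
      rwa [hφa, hφb] at this
    · -- positive weights
      intro e
      rw [hω'def]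
      dsimp only
      split
      · have := hωpos e₁; have := hωpos e₂; omega
      · exact hωpos e.1
    · -- total weight
      rw [hωsum]; exact hω35
    · -- f' is a flow
      intro u
      have hgg : g e₂ = g e₁ := by rw [hge₁, hge₂]
      have := hflowsum g hgg u
      rw [hf'def]
      rw [this]
      exact hgflow u
    · -- the residue condition
      intro g' hg'flow hg'supp
      set gg : E → ZMod 2 × ZMod 2 :=
        fun e => if h : e = e₂ then g' ⟨e₁, hne⟩ else g' ⟨e, h⟩ with hggdef
      have hgg21 : gg e₂ = gg e₁ := by simp [hggdef, hne]
      have hggval : ∀ e : E', gg e.1 = g' e := by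
        intro e
        rw [hggdef]
        dsimp only
        rw [dif_neg e.2]
      have hggflow : IsFlow ends gg := by
        intro u
        rw [← hflowsum gg hgg21 u]
        have : ∀ e : E', edgeCount (ends' e) u • gg e.1 = edgeCount (ends' e) u • g' e :=
          fun e => by rw [hggval]
        rw [Finset.sum_congr rfl fun e _ => this e]
        exact hg'flow u
      have hggsupp : ∀ e, e ∉ CE → (gg e ≠ 0 ↔ f e ≠ 0) := by
        intro e he
        have he2 : e ≠ e₂ := by rintro rfl; exact he he₂
        have h1 : gg e = g' ⟨e, he2⟩ := by rw [hggdef]; exact dif_neg he2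
        have h2 : (⟨e, he2⟩ : E') ∉ CE' := by rw [hCE'mem]; exact he
        rw [h1, hg'supp _ h2, hf'def]
        exact hgsupp e he
      have hmain := hcond gg hggflow hggsupp
      have hB : ∑ e ∈ CE'.filter (fun e => g' e = 0), ω' e
          = ∑ e ∈ CE.filter (fun e => gg e = 0), ω e := by
        have hiff : (gg e₁ = 0) ↔ (gg e₂ = 0) := by rw [hgg21]
        have := hLsum (fun e => gg e = 0) hiff
        rw [← this]
        refine Finset.sum_congr (Finset.filter_congr fun e _ => ?_) fun _ _ => rfl
        simp only [hggval e]
      rw [hωsum, hB]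
      exact hmain
  -- contradiction with minimality
  have hge := hmin V E' ends' CE' ω' f' hgood
  have hlt : Fintype.card E' < Fintype.card E :=
    Fintype.card_subtype_lt (x := e₂) (by simp)
  omega
end

section
/- Let G be a graph, C a circuit of G, g a Z₂×Z₂-flow of G, and xy, yz two edges of C with g(xy) = g(yz). Let G* be obtained from G by deleting xy and yz and adding a new edge e* = xz, and define f* on E(G*) by f*(e*) = g(xy) and f*(e) = g(e) otherwise. Then f* is a Z₂×Z₂-flow of G*, and supp(f*) − E(C*) = supp(g) − E(C), where C* is the circuit obtained from C by replacing the path x,y,z by the edge e*. Moreover |E(G*)| = |E(G)| − 1. -/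
open Finset

/-- the lifting operation: deleting two edges `xy, yz` of `C`
with equal flow value and adding a new edge `xz` carrying that value yields a
graph `G*` with a `ℤ₂×ℤ₂`-flow `f*` whose support off the new circuit `C*`
coincides with that of `g` off `C`, and `|E(G*)| = |E(G)| − 1`. -/
theorem lifting_flow {V E : Type} [Fintype V] [Fintype E] [DecidableEq V] [DecidableEq E]
    (ends : E → Sym2 V) (CE : Finset E) (hC : IsCircuit ends CE)
    (g : E → ZMod 2 × ZMod 2) (hg : IsFlow ends g)
    (x y z : V) (e₁ e₂ : E) (he₁ : e₁ ∈ CE) (he₂ : e₂ ∈ CE) (hne : e₁ ≠ e₂)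
    (hends₁ : ends e₁ = s(x, y)) (hends₂ : ends e₂ = s(y, z))
    (heq : g e₁ = g e₂) :
    -- the lifted graph has edge type `Option {e // e ≠ e₁ ∧ e ≠ e₂}`,
    -- where `none` is the new edge `e* = xz`
    IsFlow (fun o : Option {e : E // e ≠ e₁ ∧ e ≠ e₂} =>
        o.elim s(x, z) (fun e => ends e.1))
      (fun o => o.elim (g e₁) (fun e => g e.1)) ∧
    -- `supp(f*) − E(C*) = supp(g) − E(C)` (the new edge `e*` belongs to `C*`,
    -- and the remaining edges are identified with the edges of `G` other than `e₁, e₂`)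
    (∀ (e : E) (h : e ≠ e₁ ∧ e ≠ e₂),
      (((some ⟨e, h⟩ : Option {e : E // e ≠ e₁ ∧ e ≠ e₂}).elim (g e₁) (fun e' => g e'.1) ≠ 0) ∧
        ((some ⟨e, h⟩ : Option {e : E // e ≠ e₁ ∧ e ≠ e₂}) ∉
          insert (none : Option {e : E // e ≠ e₁ ∧ e ≠ e₂})
            ((((CE.erase e₁).erase e₂).subtype (fun e => e ≠ e₁ ∧ e ≠ e₂)).map
              ⟨Option.some, Option.some_injective _⟩))) ↔
      (g e ≠ 0 ∧ e ∉ CE)) ∧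
    ((none : Option {e : E // e ≠ e₁ ∧ e ≠ e₂}) ∈
        insert (none : Option {e : E // e ≠ e₁ ∧ e ≠ e₂})
          ((((CE.erase e₁).erase e₂).subtype (fun e => e ≠ e₁ ∧ e ≠ e₂)).map
            ⟨Option.some, Option.some_injective _⟩)) ∧
    Fintype.card (Option {e : E // e ≠ e₁ ∧ e ≠ e₂}) = Fintype.card E - 1 := by
  classical
  have h2 : ∀ a : ZMod 2 × ZMod 2, a + a = 0 := by decide
  have hec : ∀ a b v : V, edgeCount s(a, b) v
      = (if a = v then 1 else 0) + (if b = v then 1 else 0) := by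
    intro a b v; rfl
  refine ⟨?_, ?_, Finset.mem_insert_self _ _, ?_⟩
  · intro v
    have hsum := hg v
    rw [Fintype.sum_option]
    have hsub : ∑ e : {e : E // e ≠ e₁ ∧ e ≠ e₂},
        edgeCount (ends e.1) v • g e.1
        = ∑ e ∈ (Finset.univ \ {e₁, e₂}), edgeCount (ends e) v • g e :=
      (Finset.sum_subtype (Finset.univ \ {e₁, e₂}) (by simp [and_comm])
        (fun e => edgeCount (ends e) v • g e)).symm
    have hsplit : ∑ e ∈ (Finset.univ \ {e₁, e₂}), edgeCount (ends e) v • g e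
        + ∑ e ∈ ({e₁, e₂} : Finset E), edgeCount (ends e) v • g e
        = ∑ e : E, edgeCount (ends e) v • g e :=
      Finset.sum_sdiff (Finset.subset_univ _)
    have hpair : ∑ e ∈ ({e₁, e₂} : Finset E), edgeCount (ends e) v • g e
        = edgeCount (ends e₁) v • g e₁ + edgeCount (ends e₂) v • g e₂ := by
      rw [Finset.sum_insert (by simpa using hne), Finset.sum_singleton]
    simp only [Option.elim]
    have hval : edgeCount s(x, z) v • g e₁
        = edgeCount (ends e₁) v • g e₁ + edgeCount (ends e₂) v • g e₂ := by
      have hmod : ∀ (n : ℕ) (a : ZMod 2 × ZMod 2), n • a = (n % 2) • a := by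
        intro n a
        conv_lhs => rw [← Nat.div_add_mod n 2]
        rw [add_smul, mul_comm, mul_smul, two_nsmul, h2, smul_zero, zero_add]
      rw [hends₁, hends₂, ← heq, ← add_smul, hec, hec, hec, hmod, hmod]
      have hm2 : ((if x = v then 1 else 0) + (if z = v then 1 else 0)) % 2
          = (((if x = v then 1 else 0) + (if y = v then 1 else 0))
            + ((if y = v then 1 else 0) + (if z = v then 1 else 0))) % 2 := by
        omega
      rw [hm2, Nat.mod_mod_of_dvd _ dvd_rfl]
      exact (hmod _ _).symm
    rw [hsub, hval]
    have hfin := hsplit.trans hsum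
    rw [hpair] at hfin
    rw [← hfin]; abel
  · intro e h
    constructor
    · rintro ⟨hne0, hnotin⟩
      refine ⟨hne0, fun hmem => hnotin ?_⟩
      apply Finset.mem_insert_of_mem
      rw [Finset.mem_map]
      exact ⟨⟨e, h⟩, by simp [Finset.mem_subtype, Finset.mem_erase, h.1, h.2, hmem], rfl⟩
    · rintro ⟨hne0, hnotin⟩
      refine ⟨hne0, fun hmem => ?_⟩
      rcases Finset.mem_insert.1 hmem with h' | h'
      · exact Option.some_ne_none _ h'
      · rw [Finset.mem_map] at h'
        rcases h' with ⟨a, ha, hae⟩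
        have hae' : a = ⟨e, h⟩ := Option.some_injective _ hae
        subst hae'
        rw [Finset.mem_subtype, Finset.mem_erase, Finset.mem_erase] at ha
        exact hnotin ha.2.2
  · have hlt : 1 < Fintype.card E := Fintype.one_lt_card_iff.mpr ⟨e₁, e₂, hne⟩
    rw [Fintype.card_option, Fintype.card_subtype]
    have hfilter : Finset.univ.filter (fun e : E => e ≠ e₁ ∧ e ≠ e₂)
        = Finset.univ \ {e₁, e₂} := by
      ext e; simp [and_comm]
    rw [hfilter, Finset.card_sdiff_of_subset (Finset.subset_univ _),
      Finset.card_insert_of_notMem (by simpa using hne), Finset.card_singleton]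
    simp only [Finset.card_univ]
    omega
end
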